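/- arXiv:1602.04383 — 4 statements merged into one kernel-verified Lean document; each statement's English description precedes it below -/
import Mathlib

section
/- Let L_r ⊆ L_{r+1} be lattices in V with L_r^# = ε L_{r+1}. Then there exists a lattice L_{r†} with L_r ⊆ L_{r†} ⊆ L_{r+1} and (L_{r†})^# = ε L_{r†}. -/
open scoped Classical

noncomputable section

namespace AffLat

variable (k : Type*) [Field k]

/-- The uniformizer `ε ∈ F = k((ε))`. -/
def eps : LaurentSeries k := algebraMap (PowerSeries k) (LaurentSeries k) PowerSeries.X

/-- The subring `𝔬 = k[[ε]]` of `F = k((ε))`. -/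
def oring : Subring (LaurentSeries k) :=
  (algebraMap (PowerSeries k) (LaurentSeries k)).range

variable {k}
variable {V : Type*} [AddCommGroup V] [Module (LaurentSeries k) V]
  [Module (PowerSeries k) V] [IsScalarTower (PowerSeries k) (LaurentSeries k) V]

/-- A lattice in `V`: a finitely generated `𝔬`-submodule `L` with `F·L = V`. -/
def IsLat (L : Submodule (PowerSeries k) V) : Prop :=
  L.FG ∧ Submodule.span (LaurentSeries k) (L : Set V) = ⊤

/-- The dual `L^# = {v ∈ V | ∀ x ∈ L, (v, x) ∈ 𝔬}` of an `𝔬`-submodule `L` with respect to a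
bilinear form `Φ`. -/
def sharp (Φ : V →ₗ[LaurentSeries k] V →ₗ[LaurentSeries k] LaurentSeries k)
    (L : Submodule (PowerSeries k) V) : Submodule (PowerSeries k) V where
  carrier := {v | ∀ x ∈ L, Φ v x ∈ oring k}
  zero_mem' := fun x _ => by rw [map_zero, LinearMap.zero_apply]; exact zero_mem _
  add_mem' := fun {a b} ha hb x hx => by
    rw [map_add, LinearMap.add_apply]; exact add_mem (ha x hx) (hb x hx)
  smul_mem' := fun c v hv x hx => by
    rw [← algebraMap_smul (LaurentSeries k) c v, map_smul, LinearMap.smul_apply, smul_eq_mul]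
    exact mul_mem ⟨c, rfl⟩ (hv x hx)

/-- The `𝔬`-submodule `a • L` for a scalar `a ∈ F`. -/
def esmul (a : LaurentSeries k) (L : Submodule (PowerSeries k) V) :
    Submodule (PowerSeries k) V where
  carrier := (fun v => a • v) '' (L : Set V)
  zero_mem' := ⟨0, L.zero_mem, smul_zero a⟩
  add_mem' := by
    rintro x y ⟨x', hx', rfl⟩ ⟨y', hy', rfl⟩
    exact ⟨x' + y', L.add_mem hx' hy', smul_add a x' y'⟩
  smul_mem' := by
    rintro c x ⟨x', hx', rfl⟩
    refine ⟨c • x', L.smul_mem c hx', ?_⟩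
    show a • (c • x') = c • (a • x')
    rw [← algebraMap_smul (LaurentSeries k) c x', ← algebraMap_smul (LaurentSeries k) c (a • x'),
      smul_smul, smul_smul, mul_comm]

/-- The quotient `p / s` of an `𝔬`-submodule `p` by the `𝔬`-submodule `s ∩ p`. -/
abbrev relQ (p s : Submodule (PowerSeries k) V) : Type _ :=
  ↥p ⧸ (s.comap p.subtype)

/-- The dimension over `k` of an `𝔬`-module (with the `k`-action coming from
`k → 𝔬 = k[[ε]]`). -/
def kdim (k : Type*) [Field k] (Q : Type*) [AddCommGroup Q] [Module (PowerSeries k) Q] : ℕ :=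
  @Module.finrank k Q _ _ (Module.compHom Q (PowerSeries.C : k →+* PowerSeries k))

/-- Finite-dimensionality over `k` of an `𝔬`-module (with the `k`-action coming from
`k → 𝔬 = k[[ε]]`). -/
def kfinite (k : Type*) [Field k] (Q : Type*) [AddCommGroup Q] [Module (PowerSeries k) Q] :
    Prop :=
  @FiniteDimensional k Q _ _ (Module.compHom Q (PowerSeries.C : k →+* PowerSeries k))

end AffLat

/-!
Take, by Zorn's lemma, a maximal `𝔬`-submodule `M` with `Lr ≤ M ≤ Lr1` and `ε M ⊆ M^#`
(that is, `ε (M, M) ⊆ 𝔬`). The inclusion `ε M ⊆ M^#` holds by construction. Conversely, if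
`v ∈ M^#`, then `v ∈ Lr^# = ε Lr1`, say `v = ε u` with `u ∈ Lr1`; because the form is
alternating, `M + 𝔬 u` still satisfies `ε (M + 𝔬 u, M + 𝔬 u) ⊆ 𝔬`, so `u ∈ M` by maximality.
Finally `M` is a lattice, being squeezed between the lattice `Lr` and the finitely generated
module `Lr1` over the noetherian ring `𝔬`.
-/

namespace AffLat

variable {k : Type*} [Field k]
variable {V : Type*} [AddCommGroup V] [Module (LaurentSeries k) V] [Module (PowerSeries k) V]
  {L M N : Submodule (PowerSeries k) V}

lemma isLat_of_le_of_le (hL : IsLat L) (hN : N.FG) (hLM : L ≤ M) (hMN : M ≤ N) : IsLat M :=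
  ⟨hN.of_le hMN, top_le_iff.1 (hL.2 ▸ Submodule.span_mono hLM)⟩

variable [IsScalarTower (PowerSeries k) (LaurentSeries k) V]
  {Φ : V →ₗ[LaurentSeries k] V →ₗ[LaurentSeries k] LaurentSeries k} {a : LaurentSeries k}

lemma mem_sharp {v : V} : v ∈ sharp Φ L ↔ ∀ x ∈ L, Φ v x ∈ oring k := Iff.rfl

lemma esmul_le_iff : esmul a L ≤ N ↔ ∀ x ∈ L, a • x ∈ N := Set.image_subset_iff

lemma esmul_mono (h : L ≤ M) : esmul a L ≤ esmul a M := Set.image_mono h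

lemma sharp_antitone (h : L ≤ M) : sharp Φ M ≤ sharp Φ L := fun _ hv x hx => hv x (h hx)

lemma esmul_le_sharp_iff :
    esmul a L ≤ sharp Φ L ↔ ∀ x ∈ L, ∀ y ∈ L, a * Φ x y ∈ oring k := by
  simp only [esmul_le_iff, mem_sharp, map_smul, LinearMap.smul_apply, smul_eq_mul]

lemma apply_smul_right (v x : V) (c : PowerSeries k) :
    Φ v (c • x) = algebraMap (PowerSeries k) (LaurentSeries k) c * Φ v x := by
  rw [← algebraMap_smul (LaurentSeries k) c x, map_smul, smul_eq_mul]

lemma sharp_sup : sharp Φ (M ⊔ N) = sharp Φ M ⊓ sharp Φ N := by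
  refine le_antisymm (le_inf (sharp_antitone le_sup_left) (sharp_antitone le_sup_right)) ?_
  rintro v ⟨hvM, hvN⟩ x hx
  obtain ⟨m, hm, n, hn, rfl⟩ := Submodule.mem_sup.1 hx
  rw [map_add]
  exact add_mem (hvM m hm) (hvN n hn)

lemma mem_sharp_span_singleton {u v : V} :
    v ∈ sharp Φ (Submodule.span (PowerSeries k) {u}) ↔ Φ v u ∈ oring k := by
  refine ⟨fun hv => hv u (Submodule.mem_span_singleton_self u), fun hv x hx => ?_⟩
  obtain ⟨c, rfl⟩ := Submodule.mem_span_singleton.1 hx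
  rw [apply_smul_right]
  exact mul_mem ⟨c, rfl⟩ hv

lemma esmul_sup_span_singleton_le_sharp (hΦ : Φ.IsAlt) (hM : esmul a M ≤ sharp Φ M) {u : V}
    (hu : a • u ∈ sharp Φ M) :
    esmul a (M ⊔ Submodule.span (PowerSeries k) {u}) ≤
      sharp Φ (M ⊔ Submodule.span (PowerSeries k) {u}) := by
  have huu : a • u ∈ sharp Φ (Submodule.span (PowerSeries k) {u}) := by
    rw [mem_sharp_span_singleton, map_smul, LinearMap.smul_apply, hΦ.self_eq_zero, smul_zero]
    exact zero_mem _
  have hMu : ∀ m ∈ M, a • m ∈ sharp Φ (Submodule.span (PowerSeries k) {u}) := fun m hm => by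
    have h := neg_mem (hu m hm)
    rwa [map_smul, LinearMap.smul_apply, ← smul_neg, hΦ.neg, ← LinearMap.smul_apply,
      ← map_smul, ← mem_sharp_span_singleton] at h
  rw [esmul_le_iff, sharp_sup]
  intro x hx
  obtain ⟨m, hm, y, hy, rfl⟩ := Submodule.mem_sup.1 hx
  obtain ⟨c, rfl⟩ := Submodule.mem_span_singleton.1 hy
  rw [smul_add, smul_comm]
  exact add_mem ⟨esmul_le_iff.1 hM m hm, hMu m hm⟩ (Submodule.smul_mem _ c ⟨hu, huu⟩)

lemma esmul_sSup_le_sharp_of_isChain {c : Set (Submodule (PowerSeries k) V)}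
    (hc : IsChain (· ≤ ·) c) (hne : c.Nonempty) (h : ∀ M ∈ c, esmul a M ≤ sharp Φ M) :
    esmul a (sSup c) ≤ sharp Φ (sSup c) := by
  rw [esmul_le_sharp_iff]
  intro x hx y hy
  rw [Submodule.mem_sSup_of_directed hne hc.directedOn] at hx hy
  obtain ⟨M₁, hM₁, hx⟩ := hx
  obtain ⟨M₂, hM₂, hy⟩ := hy
  rcases hc.total hM₁ hM₂ with h₁₂ | h₂₁
  · exact esmul_le_sharp_iff.1 (h M₂ hM₂) x (h₁₂ hx) y hy
  · exact esmul_le_sharp_iff.1 (h M₁ hM₁) x hx y (h₂₁ hy)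

lemma exists_maximal_esmul_le_sharp (hL : esmul a L ≤ sharp Φ L) (hLN : L ≤ N) :
    ∃ M, L ≤ M ∧ Maximal (fun M => M ≤ N ∧ esmul a M ≤ sharp Φ M) M := by
  refine zorn_le_nonempty₀ {M | M ≤ N ∧ esmul a M ≤ sharp Φ M} ?_ L ⟨hLN, hL⟩
  intro c hcS hc M hM
  exact ⟨sSup c, ⟨sSup_le fun M hM => (hcS hM).1,
    esmul_sSup_le_sharp_of_isChain hc ⟨M, hM⟩ fun M hM => (hcS hM).2⟩, fun _ => le_sSup⟩

lemma sharp_eq_esmul_of_maximal (hΦ : Φ.IsAlt)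
    (hmax : Maximal (fun M => M ≤ N ∧ esmul a M ≤ sharp Φ M) M) (hLM : L ≤ M)
    (hL : sharp Φ L ≤ esmul a N) :
    sharp Φ M = esmul a M := by
  refine le_antisymm (fun v hv => ?_) hmax.1.2
  obtain ⟨u, huN, rfl⟩ := hL (sharp_antitone hLM hv)
  have hsup : M ⊔ Submodule.span (PowerSeries k) {u} ≤ M :=
    hmax.2 ⟨sup_le hmax.1.1 (Submodule.span_le.2 (Set.singleton_subset_iff.2 huN)),
      esmul_sup_span_singleton_le_sharp hΦ hmax.1.2 hv⟩ le_sup_left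
  exact ⟨u, hsup (Submodule.mem_sup_right (Submodule.mem_span_singleton_self u)), rfl⟩

end AffLat

open AffLat

theorem statement5_general {k : Type*} [Field k]
    {V : Type*} [AddCommGroup V] [Module (LaurentSeries k) V]
    [Module (PowerSeries k) V] [IsScalarTower (PowerSeries k) (LaurentSeries k) V]
    (Φ : V →ₗ[LaurentSeries k] V →ₗ[LaurentSeries k] LaurentSeries k)
    (halt : ∀ v : V, Φ v v = 0)
    (Lr Lr1 : Submodule (PowerSeries k) V) (hLr : IsLat Lr) (hLr1 : IsLat Lr1)
    (hsub : Lr ≤ Lr1)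
    (hsharp : sharp Φ Lr = esmul (eps k) Lr1) :
    ∃ Ld : Submodule (PowerSeries k) V,
      IsLat Ld ∧ Lr ≤ Ld ∧ Ld ≤ Lr1 ∧ sharp Φ Ld = esmul (eps k) Ld := by
  have hLr_iso : esmul (eps k) Lr ≤ sharp Φ Lr := hsharp ▸ esmul_mono hsub
  obtain ⟨Ld, hLrLd, hmax⟩ := exists_maximal_esmul_le_sharp hLr_iso hsub
  exact ⟨Ld, isLat_of_le_of_le hLr hLr1.1 hLrLd hmax.1.1, hLrLd, hmax.1.1,
    sharp_eq_esmul_of_maximal halt hmax hLrLd hsharp.le⟩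

/-- Let `L_r ⊆ L_{r+1}` be lattices with `L_r^# = ε L_{r+1}`.  Then there is
a lattice `L_{r†}` with `L_r ⊆ L_{r†} ⊆ L_{r+1}` and `L_{r†}^# = ε L_{r†}`. -/
theorem statement5 {k : Type*} [Field k] [Fintype k] (hodd : Odd (Fintype.card k))
    {V : Type*} [AddCommGroup V] [Module (LaurentSeries k) V]
    [Module (PowerSeries k) V] [IsScalarTower (PowerSeries k) (LaurentSeries k) V]
    [FiniteDimensional (LaurentSeries k) V]
    (Φ : V →ₗ[LaurentSeries k] V →ₗ[LaurentSeries k] LaurentSeries k)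
    (halt : ∀ v : V, Φ v v = 0)
    (hnondeg : ∀ v : V, (∀ w : V, Φ v w = 0) → v = 0)
    (Lr Lr1 : Submodule (PowerSeries k) V) (hLr : IsLat Lr) (hLr1 : IsLat Lr1)
    (hsub : Lr ≤ Lr1)
    (hsharp : sharp Φ Lr = esmul (eps k) Lr1) :
    ∃ Ld : Submodule (PowerSeries k) V,
      IsLat Ld ∧ Lr ≤ Ld ∧ Ld ≤ Lr1 ∧ sharp Φ Ld = esmul (eps k) Ld :=
  statement5_general Φ halt Lr Lr1 hLr hLr1 hsub hsharp
end
end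

section
/- Let M be a lattice in V with M^# = ε M, and let b be the nondegenerate alternating k-bilinear form on M/εM given by b(x + εM, y + εM) = (ε·(x, y) mod ε𝔬). Let L_0 be a lattice with ε M ⊆ L_0^# ⊆ L_0 ⊆ M and write L_{−1} = L_0^#. Then L_{−1}/εM and L_0/εM are orthogonal complements of each other in M/εM with respect to b; that is, the b-orthogonal complement of L_0/εM equals L_{−1}/εM and the b-orthogonal complement of L_{−1}/εM equals L_0/εM. -/
open scoped Classical

noncomputable section

namespace AffLat

/-- The residue pairing `(x, y) ↦ (ε·(x,y) mod ε𝔬) ∈ k ≅ 𝔬/ε𝔬`, computed as the coefficient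
of `ε^0` in the Laurent series `ε · Φ x y`. -/
def bres {k : Type*} [Field k] {V : Type*} [AddCommGroup V] [Module (LaurentSeries k) V]
    (Φ : V →ₗ[LaurentSeries k] V →ₗ[LaurentSeries k] LaurentSeries k) (x y : V) : k :=
  (eps k * Φ x y).coeff 0

end AffLat

/-!
The pairing `b(x, y)` is the coefficient of `ε⁻¹` in `(x, y)`. If `εy ∈ L^#`, then
`(y, x) ∈ ε⁻¹𝔬` for every `x ∈ L`, so `(y, x) ∈ 𝔬` exactly when its `ε⁻¹`-coefficient vanishes;
hence `y` is `b`-orthogonal to `L` iff `y ∈ L^#`. Since `εM ⊆ L₋₁ ⊆ L₀`, this applies to `L₀` and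
to `L₋₁`, and `L₋₁^# = L₀` because `L^## = L` for every lattice `L`: a basis of `L` is an
`F`-basis of `V`, and the dual basis of its dual basis is the basis itself.
-/

namespace LinearMap.BilinForm

variable {R S M : Type*} [CommRing R] [Field S] [AddCommGroup M] [Algebra R S] [Module R M]
  [Module S M] [IsScalarTower R S M]

lemma dualSubmodule_flip_of_isAlt {B : LinearMap.BilinForm S M} (hB : B.IsAlt)
    (N : Submodule R M) : B.flip.dualSubmodule N = B.dualSubmodule N :=
  Submodule.ext fun _ => forall₂_congr fun _ _ => by
    rw [flip_apply, ← LinearMap.IsAlt.neg hB, neg_mem_iff]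

end LinearMap.BilinForm

namespace AffLat

section LaurentSeries

variable {k : Type*} [Field k]

lemma eps_eq_single : eps k = HahnSeries.single (1 : ℤ) (1 : k) := by
  rw [eps, LaurentSeries.coe_algebraMap, HahnSeries.ofPowerSeries_X]

lemma coeff_eps_mul (f : LaurentSeries k) (n : ℤ) : (eps k * f).coeff n = f.coeff (n - 1) := by
  conv_lhs => rw [← sub_add_cancel n 1, eps_eq_single, HahnSeries.coeff_single_mul_add, one_mul]

lemma coeff_eq_zero_of_mem_oring {f : LaurentSeries k} (hf : f ∈ oring k) {n : ℤ} (hn : n < 0) :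
    f.coeff n = 0 := by
  obtain ⟨p, rfl⟩ := hf
  refine HahnSeries.embDomain_of_notMem_range ?_
  rintro ⟨m, rfl⟩
  exact (Int.natCast_nonneg m).not_gt hn

lemma mem_oring_iff {f : LaurentSeries k} : f ∈ oring k ↔ ∀ n < 0, f.coeff n = 0 := by
  refine ⟨fun hf _ => coeff_eq_zero_of_mem_oring hf, fun hf => ?_⟩
  refine ⟨PowerSeries.mk fun m => f.coeff m, HahnSeries.ext (funext fun n => ?_)⟩
  rcases le_or_gt 0 n with hn | hn
  · lift n to ℕ using hn
    rw [LaurentSeries.coe_algebraMap, HahnSeries.ofPowerSeries_apply_coeff, PowerSeries.coeff_mk]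
  · rw [hf n hn]
    exact coeff_eq_zero_of_mem_oring ⟨_, rfl⟩ hn

lemma mem_oring_iff_coeff_neg_one_eq_zero {f : LaurentSeries k} (hf : eps k * f ∈ oring k) :
    f ∈ oring k ↔ f.coeff (-1) = 0 := by
  simp only [mem_oring_iff, coeff_eps_mul] at hf ⊢
  refine ⟨fun h => h (-1) (by norm_num), fun h n hn => ?_⟩
  rcases eq_or_lt_of_le (Int.le_sub_one_of_lt hn) with rfl | hn'
  · exact h
  · simpa using hf (n + 1) (by omega)

lemma bres_eq_coeff_neg_one {V : Type*} [AddCommGroup V] [Module (LaurentSeries k) V]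
    (Φ : V →ₗ[LaurentSeries k] V →ₗ[LaurentSeries k] LaurentSeries k) (x y : V) :
    bres Φ x y = (Φ x y).coeff (-1) := by
  rw [bres, coeff_eps_mul, zero_sub]

end LaurentSeries

section Duality

open LinearMap (BilinForm)

variable {k : Type*} [Field k] {V : Type*} [AddCommGroup V] [Module (LaurentSeries k) V]
  [Module (PowerSeries k) V] [IsScalarTower (PowerSeries k) (LaurentSeries k) V]
  {Φ : V →ₗ[LaurentSeries k] V →ₗ[LaurentSeries k] LaurentSeries k}

variable (Φ) in
lemma sharp_eq_dualSubmodule (L : Submodule (PowerSeries k) V) :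
    sharp Φ L = BilinForm.dualSubmodule Φ L :=
  Submodule.ext fun _ => forall₂_congr fun _ _ => Submodule.mem_one.symm

lemma forall_bres_eq_zero_iff_mem_sharp (halt : Φ.IsAlt) {L : Submodule (PowerSeries k) V}
    {y : V} (hy : eps k • y ∈ sharp Φ L) : (∀ x ∈ L, bres Φ x y = 0) ↔ y ∈ sharp Φ L := by
  refine forall₂_congr fun x hx => ?_
  have hyx : eps k * Φ y x ∈ oring k := by simpa using hy x hx
  rw [bres_eq_coeff_neg_one, ← halt.neg y x, HahnSeries.coeff_neg, neg_eq_zero,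
    mem_oring_iff_coeff_neg_one_eq_zero hyx]

theorem sharp_sharp (halt : Φ.IsAlt) (hnondeg : Φ.SeparatingLeft)
    {L : Submodule (PowerSeries k) V} (hL : IsLat L) : sharp Φ (sharp Φ L) = L := by
  have : Submodule.IsLattice (LaurentSeries k) L := ⟨hL.1, hL.2⟩
  set c := Module.Free.chooseBasis (PowerSeries k) L
  set b := c.extendOfIsLattice (LaurentSeries k)
  have hspan : Submodule.span (PowerSeries k) (Set.range b) = L := by
    have hb : ⇑b = L.subtype ∘ c := funext (c.extendOfIsLattice_apply (LaurentSeries k))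
    rw [hb, Set.range_comp, ← Submodule.map_span, c.span_eq, Submodule.map_top,
      Submodule.range_subtype]
  have hnd : Φ.Nondegenerate := halt.isRefl.nondegenerate_iff_separatingLeft.mpr hnondeg
  have key := BilinForm.dualSubmodule_dualSubmodule_flip_of_basis
    (R := PowerSeries k) Φ hnd b
  rw [hspan, BilinForm.dualSubmodule_flip_of_isAlt halt] at key
  rw [sharp_eq_dualSubmodule, sharp_eq_dualSubmodule, key]

end Duality

end AffLat

open AffLat

theorem statement7_general {k : Type*} [Field k]
    {V : Type*} [AddCommGroup V] [Module (LaurentSeries k) V]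
    [Module (PowerSeries k) V] [IsScalarTower (PowerSeries k) (LaurentSeries k) V]
    (Φ : V →ₗ[LaurentSeries k] V →ₗ[LaurentSeries k] LaurentSeries k)
    (halt : ∀ v : V, Φ v v = 0)
    (hnondeg : ∀ v : V, (∀ w : V, Φ v w = 0) → v = 0)
    (M : Submodule (PowerSeries k) V)
    (L₀ : Submodule (PowerSeries k) V) (hL₀ : IsLat L₀)
    (h1 : esmul (eps k) M ≤ sharp Φ L₀) (h2 : sharp Φ L₀ ≤ L₀) :
    -- the `b`-orthogonal complement of `L₀/εM` equals `L₋₁/εM`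
    (∀ y ∈ M, (∀ x ∈ L₀, bres Φ x y = 0) ↔ y ∈ sharp Φ L₀) ∧
    -- the `b`-orthogonal complement of `L₋₁/εM` equals `L₀/εM`
    (∀ y ∈ M, (∀ x ∈ sharp Φ L₀, bres Φ x y = 0) ↔ y ∈ L₀) := by
  have hεy : ∀ y ∈ M, eps k • y ∈ sharp Φ L₀ := fun y hy => h1 ⟨y, hy, rfl⟩
  have hdual := sharp_sharp halt hnondeg hL₀
  refine ⟨fun y hy => forall_bres_eq_zero_iff_mem_sharp halt (hεy y hy), fun y hy => ?_⟩
  have hεy' : eps k • y ∈ sharp Φ (sharp Φ L₀) := by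
    rw [hdual]; exact h2 (hεy y hy)
  rw [forall_bres_eq_zero_iff_mem_sharp halt hεy', hdual]

/-- Let `M` be a lattice with `M^# = εM` and let `b` be the induced
nondegenerate alternating `k`-bilinear form on `M/εM`.  Let `L₀` be a lattice with
`εM ⊆ L₀^# ⊆ L₀ ⊆ M` and `L₋₁ = L₀^#`.  Then `L₋₁/εM` and `L₀/εM` are the `b`-orthogonal
complements of each other in `M/εM`. -/
theorem statement7 {k : Type*} [Field k] [Fintype k] (hodd : Odd (Fintype.card k))
    {V : Type*} [AddCommGroup V] [Module (LaurentSeries k) V]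
    [Module (PowerSeries k) V] [IsScalarTower (PowerSeries k) (LaurentSeries k) V]
    [FiniteDimensional (LaurentSeries k) V]
    (Φ : V →ₗ[LaurentSeries k] V →ₗ[LaurentSeries k] LaurentSeries k)
    (halt : ∀ v : V, Φ v v = 0)
    (hnondeg : ∀ v : V, (∀ w : V, Φ v w = 0) → v = 0)
    (M : Submodule (PowerSeries k) V) (hM : IsLat M)
    (hMsharp : sharp Φ M = esmul (eps k) M)
    (L₀ : Submodule (PowerSeries k) V) (hL₀ : IsLat L₀)
    (h1 : esmul (eps k) M ≤ sharp Φ L₀) (h2 : sharp Φ L₀ ≤ L₀) (h3 : L₀ ≤ M) :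
    -- the `b`-orthogonal complement of `L₀/εM` equals `L₋₁/εM`
    (∀ y ∈ M, (∀ x ∈ L₀, bres Φ x y = 0) ↔ y ∈ sharp Φ L₀) ∧
    -- the `b`-orthogonal complement of `L₋₁/εM` equals `L₀/εM`
    (∀ y ∈ M, (∀ x ∈ sharp Φ L₀, bres Φ x y = 0) ↔ y ∈ L₀) :=
  statement7_general Φ halt hnondeg M L₀ hL₀ h1 h2
end
end

section
/- Let M be a lattice in V with M^# = ε M, let b be the nondegenerate alternating k-bilinear form on M/εM given by b(x + εM, y + εM) = (ε·(x, y) mod ε𝔬), and let L_0 be a lattice with ε M ⊆ L_0^# ⊆ L_0 ⊆ M, with L_{−1} = L_0^#. Then the assignment L′ ↦ L′/εM is a bijection from the set of lattices L′ in V with L_{−1} ⊆ (L′)^# ⊆ L′ ⊆ L_0 and dim_k L_0/L′ = 1 onto the set of k-subspaces W of L_0/εM with L_{−1}/εM ⊆ W ⊆ L_0/εM, dim_k (L_0/εM)/W = 1, and W^⊥ ⊆ W, where W^⊥ denotes the b-orthogonal complement of W in M/εM. -/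
/-!
Since `M^# = εM`, the dual of `εM` is `M`, so every `𝔬`-module `L'` with `εM ⊆ L'` has
`L'^# ⊆ M`. For `L' ⊆ M` and `y ∈ M` the value `ε (w, y)` is integral for all `w ∈ L'`, so
`(w, y) ∈ 𝔬` exactly when its residue `b(w, y)` vanishes: on `M`, the dual `L'^#` is the
`b`-orthogonal of `L'`. Hence `L'^# ⊆ L'` says precisely `W^⊥ ⊆ W`, and the lattice
condition is automatic between `εM` and `M`.
-/

open scoped Classical

noncomputable section

open AffLat

namespace AffLat

variable {k : Type*} [Field k]

lemma eps_ne_zero : eps k ≠ 0 :=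
  (map_ne_zero_iff _ (IsFractionRing.injective (PowerSeries k) (LaurentSeries k))).mpr
    PowerSeries.X_ne_zero

lemma coeff_zero_algebraMap (f : PowerSeries k) :
    (algebraMap (PowerSeries k) (LaurentSeries k) f).coeff 0 = PowerSeries.constantCoeff f := by
  rw [LaurentSeries.coe_algebraMap]
  simpa using LaurentSeries.coeff_coe_powerSeries f 0

lemma eps_mul_algebraMap (f : PowerSeries k) :
    eps k * algebraMap (PowerSeries k) (LaurentSeries k) f =
      algebraMap (PowerSeries k) (LaurentSeries k) (PowerSeries.X * f) :=
  (map_mul _ _ _).symm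

lemma mem_oring_iff_coeff_eps_mul_eq_zero {f : LaurentSeries k} (h : eps k * f ∈ oring k) :
    f ∈ oring k ↔ (eps k * f).coeff 0 = 0 := by
  constructor
  · rintro ⟨g, rfl⟩
    rw [eps_mul_algebraMap, coeff_zero_algebraMap, map_mul, PowerSeries.constantCoeff_X,
      zero_mul]
  · obtain ⟨g, hg⟩ := h
    rw [← hg, coeff_zero_algebraMap]
    intro hg0
    obtain ⟨g', rfl⟩ := PowerSeries.X_dvd_iff.mpr hg0
    rw [← eps_mul_algebraMap] at hg
    exact ⟨g', mul_left_cancel₀ eps_ne_zero hg⟩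

variable {V : Type*} [AddCommGroup V] [Module (LaurentSeries k) V]
  [Module (PowerSeries k) V] [IsScalarTower (PowerSeries k) (LaurentSeries k) V]
  {Φ : V →ₗ[LaurentSeries k] V →ₗ[LaurentSeries k] LaurentSeries k}

lemma sharp_antitone_s8 : Antitone (sharp Φ) :=
  fun _ _ h _ hv x hx => hv x (h hx)

lemma smul_mem_esmul_iff {a : LaurentSeries k} (ha : a ≠ 0) {L : Submodule (PowerSeries k) V}
    {v : V} : a • v ∈ esmul a L ↔ v ∈ L :=
  (smul_right_injective V ha).mem_set_image

lemma mem_sharp_esmul_iff {a : LaurentSeries k} {L : Submodule (PowerSeries k) V} {v : V} :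
    v ∈ sharp Φ (esmul a L) ↔ a • v ∈ sharp Φ L := by
  change (∀ x ∈ (fun u => a • u) '' (L : Set V), _) ↔ ∀ x ∈ L, _
  simp only [Set.forall_mem_image, map_smul, LinearMap.smul_apply, smul_eq_mul, SetLike.mem_coe]

lemma sharp_esmul_eps {M : Submodule (PowerSeries k) V} (hM : sharp Φ M = esmul (eps k) M) :
    sharp Φ (esmul (eps k) M) = M := by
  ext v
  rw [mem_sharp_esmul_iff, hM, smul_mem_esmul_iff eps_ne_zero]

lemma mem_sharp_iff_forall_bres_eq_zero (halt : Φ.IsAlt) {M L' : Submodule (PowerSeries k) V}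
    (hM : sharp Φ M = esmul (eps k) M) (hL' : L' ≤ M) {y : V} (hy : y ∈ M) :
    y ∈ sharp Φ L' ↔ ∀ w ∈ L', bres Φ w y = 0 := by
  have hεy : eps k • y ∈ sharp Φ M := hM ▸ ⟨y, hy, rfl⟩
  refine forall₂_congr fun w hw => ?_
  have hwy : eps k * Φ w y ∈ oring k := by
    have h := neg_mem (hεy w (hL' hw))
    rwa [map_smul, LinearMap.smul_apply, smul_eq_mul, ← halt.neg, mul_neg, neg_neg] at h
  rw [← halt.neg, neg_mem_iff]
  exact mem_oring_iff_coeff_eps_mul_eq_zero hwy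

lemma IsLat.of_esmul_le_of_le {a : LaurentSeries k} (ha : a ≠ 0)
    {M L : Submodule (PowerSeries k) V} (hM : IsLat M) (h₁ : esmul a M ≤ L) (h₂ : L ≤ M) :
    IsLat L := by
  refine ⟨hM.1.of_le h₂, top_unique ?_⟩
  rw [← hM.2, Submodule.span_le]
  intro x hx
  have hax := Submodule.smul_mem _ a⁻¹ (Submodule.subset_span (R := LaurentSeries k)
    (h₁ ⟨x, hx, rfl⟩))
  rwa [smul_smul, inv_mul_cancel₀ ha, one_smul] at hax

end AffLat

theorem statement8_general {k : Type*} [Field k]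
    {V : Type*} [AddCommGroup V] [Module (LaurentSeries k) V]
    [Module (PowerSeries k) V] [IsScalarTower (PowerSeries k) (LaurentSeries k) V]
    (Φ : V →ₗ[LaurentSeries k] V →ₗ[LaurentSeries k] LaurentSeries k)
    (halt : ∀ v : V, Φ v v = 0)
    (M : Submodule (PowerSeries k) V) (hM : IsLat M)
    (hMsharp : sharp Φ M = esmul (eps k) M)
    (L₀ : Submodule (PowerSeries k) V)
    (h1 : esmul (eps k) M ≤ sharp Φ L₀) (h3 : L₀ ≤ M) :
    {L' : Submodule (PowerSeries k) V |
        IsLat L' ∧ sharp Φ L₀ ≤ sharp Φ L' ∧ sharp Φ L' ≤ L' ∧ L' ≤ L₀ ∧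
        kdim k (relQ L₀ L') = 1} =
    {L' : Submodule (PowerSeries k) V |
        -- `W = L′/εM` is a subspace of `L₀/εM` containing `L₋₁/εM` …
        esmul (eps k) M ≤ L' ∧ sharp Φ L₀ ≤ L' ∧ L' ≤ L₀ ∧
        -- … of codimension `1` in `L₀/εM` …
        kdim k (relQ L₀ L') = 1 ∧
        -- … with `W^⊥ ⊆ W` (orthogonal complement in `M/εM` with respect to `b`)
        (∀ y ∈ M, (∀ w ∈ L', bres Φ w y = 0) → y ∈ L')} := by
  ext L'
  constructor
  · rintro ⟨-, hs, hself, hle, hdim⟩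
    refine ⟨h1.trans (hs.trans hself), hs.trans hself, hle, hdim, fun y hy hb => hself ?_⟩
    exact (mem_sharp_iff_forall_bres_eq_zero halt hMsharp (hle.trans h3) hy).mpr hb
  · rintro ⟨hεM, -, hle, hdim, horth⟩
    have hsharp_le_M : sharp Φ L' ≤ M := sharp_esmul_eps hMsharp ▸ sharp_antitone_s8 hεM
    refine ⟨hM.of_esmul_le_of_le eps_ne_zero hεM (hle.trans h3), sharp_antitone_s8 hle,
      fun y hy => horth y (hsharp_le_M hy) ?_, hle, hdim⟩
    exact (mem_sharp_iff_forall_bres_eq_zero halt hMsharp (hle.trans h3) (hsharp_le_M hy)).mp hy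

/-- Let `M` be a lattice with `M^# = εM`, `b` the induced form on `M/εM`,
and `L₀` a lattice with `εM ⊆ L₀^# ⊆ L₀ ⊆ M`, `L₋₁ = L₀^#`.  The assignment `L′ ↦ L′/εM` is a
bijection from the set of lattices `L′` with `L₋₁ ⊆ L′^# ⊆ L′ ⊆ L₀` and `dim_k L₀/L′ = 1`
onto the set of `k`-subspaces `W` of `L₀/εM` with `L₋₁/εM ⊆ W`, of codimension `1` in
`L₀/εM`, and with `W^⊥ ⊆ W`.  Since the `k`-subspaces of `M/εM` correspond exactly to the
`𝔬`-submodules of `V` lying between `εM` and `M` (via `W = L′/εM`), this bijection is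
expressed as an equality of the two corresponding sets of `𝔬`-submodules of `V`. -/
theorem statement8 {k : Type*} [Field k] [Fintype k] (hodd : Odd (Fintype.card k))
    {V : Type*} [AddCommGroup V] [Module (LaurentSeries k) V]
    [Module (PowerSeries k) V] [IsScalarTower (PowerSeries k) (LaurentSeries k) V]
    [FiniteDimensional (LaurentSeries k) V]
    (Φ : V →ₗ[LaurentSeries k] V →ₗ[LaurentSeries k] LaurentSeries k)
    (halt : ∀ v : V, Φ v v = 0)
    (hnondeg : ∀ v : V, (∀ w : V, Φ v w = 0) → v = 0)
    (M : Submodule (PowerSeries k) V) (hM : IsLat M)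
    (hMsharp : sharp Φ M = esmul (eps k) M)
    (L₀ : Submodule (PowerSeries k) V) (hL₀ : IsLat L₀)
    (h1 : esmul (eps k) M ≤ sharp Φ L₀) (h2 : sharp Φ L₀ ≤ L₀) (h3 : L₀ ≤ M) :
    {L' : Submodule (PowerSeries k) V |
        IsLat L' ∧ sharp Φ L₀ ≤ sharp Φ L' ∧ sharp Φ L' ≤ L' ∧ L' ≤ L₀ ∧
        kdim k (relQ L₀ L') = 1} =
    {L' : Submodule (PowerSeries k) V |
        -- `W = L′/εM` is a subspace of `L₀/εM` containing `L₋₁/εM` …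
        esmul (eps k) M ≤ L' ∧ sharp Φ L₀ ≤ L' ∧ L' ≤ L₀ ∧
        -- … of codimension `1` in `L₀/εM` …
        kdim k (relQ L₀ L') = 1 ∧
        -- … with `W^⊥ ⊆ W` (orthogonal complement in `M/εM` with respect to `b`)
        (∀ y ∈ M, (∀ w ∈ L', bres Φ w y = 0) → y ∈ L')} :=
  statement8_general Φ halt M hM hMsharp L₀ h1 h3
end
end

section
/- Let A ∈ ^cΞ_{n,d} and A′ = A + E^{00} + E^{r+1,r+1}. Then A′ ∈ Ξ_{n,d}, and Σ′(A) + Σ_0(A) + Σ_{r+1}(A) = Σ′(A′) − Σ_0(A′) − Σ_{r+1}(A′); equivalently, (1/2)·(Σ′(A) + Σ_0(A) + Σ_{r+1}(A)) = (1/2)·(Σ′(A′) − Σ_0(A′) − Σ_{r+1}(A′)). -/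
open scoped Classical

noncomputable section

namespace AffMat

/-- Membership in `^cΞ_{n,d}` (with `n = 2r+2`): `a_{-i,-j} = a_{ij} = a_{i+n,j+n}`,
`Σ_{i=1}^{n} Σ_{j ∈ ℤ} a_{ij} = 2d`, and `a_{00}`, `a_{r+1,r+1}` are even. -/
def MemXiCper (r d : ℕ) (A : ℤ → ℤ → ℕ) : Prop :=
  (∀ i j : ℤ, A i j = A (-i) (-j)) ∧
  (∀ i j : ℤ, A i j = A (i + (2 * r + 2)) (j + (2 * r + 2))) ∧
  Even (A 0 0) ∧ Even (A ((r : ℤ) + 1) ((r : ℤ) + 1)) ∧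
  (∑ᶠ j : ℤ, ∑ i ∈ Finset.Icc (1 : ℤ) (2 * r + 2), A i j) = 2 * d

/-- Membership in `Ξ_{n,d}` (with `n = 2r+2`): the same conditions except that the total sum
is `2d+2` and `a_{00}`, `a_{r+1,r+1}` are odd. -/
def MemXi (r d : ℕ) (A : ℤ → ℤ → ℕ) : Prop :=
  (∀ i j : ℤ, A i j = A (-i) (-j)) ∧
  (∀ i j : ℤ, A i j = A (i + (2 * r + 2)) (j + (2 * r + 2))) ∧
  Odd (A 0 0) ∧ Odd (A ((r : ℤ) + 1) ((r : ℤ) + 1)) ∧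
  (∑ᶠ j : ℤ, ∑ i ∈ Finset.Icc (1 : ℤ) (2 * r + 2), A i j) = 2 * d + 2

/-- The `n`-periodic matrix `E^{ij}`: its `(a,b)` entry is `1` if `(a,b) = (i+pn, j+pn)` for
some `p ∈ ℤ`, and `0` otherwise. -/
def Eper (n i j : ℤ) : ℤ → ℤ → ℕ := fun a b =>
  if ∃ p : ℤ, a = i + p * n ∧ b = j + p * n then 1 else 0

/-- `Σ'(X) = Σ x_{ij} x_{kl}`, summed over quadruples `(i,j,k,l)` with `1 ≤ i ≤ n`, `i ≥ k`,
`j < l` (here `n = 2r+2`). -/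
def SigQuad (r : ℕ) (X : ℤ → ℤ → ℕ) : ℕ :=
  ∑ᶠ i : ℤ, ∑ᶠ j : ℤ, ∑ᶠ m : ℤ, ∑ᶠ l : ℤ,
    if 1 ≤ i ∧ i ≤ 2 * (r : ℤ) + 2 ∧ m ≤ i ∧ j < l then X i j * X m l else 0

/-- `Σ_m(X) = Σ_{i ≥ m > j} x_{ij}`. -/
def SigHook (m : ℤ) (X : ℤ → ℤ → ℕ) : ℕ :=
  ∑ᶠ i : ℤ, ∑ᶠ j : ℤ, if m ≤ i ∧ j < m then X i j else 0

end AffMat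

open AffMat

/-!
Write `A′ = A + E` with `E = E^{00} + E^{r+1,r+1}` and expand `Σ′(A + E)` bilinearly. `Σ′(E)`
vanishes because `E` is diagonal and `Σ′` pairs `(i,j)` with `(k,l)` only when `k ≤ i`, `j < l`.
With `A` in the `(i,j)`-slot and `E^{cc}` in the `(k,l)`-slot, the periodic copies of `E^{cc}`
unfold the row window `1 ≤ i ≤ n` to all of `ℤ` and give exactly the hook `Σ_c(A)`. With `E^{cc}`
in the `(i,j)`-slot only the copy at `(c', c')`, `1 ≤ c' ≤ n`, survives and leaves the co-hook
`Σ_{k ≤ c' < l} a_{kl}`, which symmetry and periodicity turn into `Σ_{-c'+n}(A)`, i.e. `Σ_0(A)` or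
`Σ_{r+1}(A)`. So `Σ′(A′) = Σ′(A) + 2Σ_0(A) + 2Σ_{r+1}(A)`, while `Σ_m(A′) = Σ_m(A)` since `E` is
diagonal.

The computation is done with `ℝ≥0∞`-valued sums, where reindexing and interchanging sums need
no side conditions. Transporting the `finsum`s there only needs finite supports, which hold
because `A` is banded: its rows `1, …, n` are finitely supported (the total is `2d ≠ 0`), and
periodicity moves every entry into these rows.
-/

open scoped ENNReal
open Function

namespace AffMat

section FinsumTsum

variable {α β γ δ M : Type*}

theorem exists_ne_zero_of_finsum_ne_zero [AddCommMonoid M] {f : α → M} (h : ∑ᶠ a, f a ≠ 0) :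
    ∃ a, f a ≠ 0 := by
  by_contra! hf
  exact h (finsum_eq_zero_of_forall_eq_zero hf)

theorem finsum_ite_eq_one [DecidableEq α] (c : α) : ∑ᶠ a : α, (if a = c then 1 else 0 : ℕ) = 1 := by
  rw [finsum_eq_single _ c fun a ha => if_neg ha, if_pos rfl]

theorem coe_finsum_eq_tsum {f : α → ℕ} (hf : (support f).Finite) :
    ((∑ᶠ a, f a : ℕ) : ℝ≥0∞) = ∑' a, (f a : ℝ≥0∞) := by
  rw [tsum_eq_finsum (hf.subset fun a ha h => ha (by simpa using h))]
  exact (Nat.castAddMonoidHom ℝ≥0∞).map_finsum hf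

theorem coe_finsum_finsum_eq_tsum_tsum {f : α → β → ℕ} (hf : (support (uncurry f)).Finite) :
    ((∑ᶠ a, ∑ᶠ b, f a b : ℕ) : ℝ≥0∞) = ∑' a, ∑' b, (f a b : ℝ≥0∞) := by
  have hrow (a : α) : (support (f a)).Finite :=
    (hf.image Prod.snd).subset fun b hb => ⟨(a, b), hb, rfl⟩
  rw [coe_finsum_eq_tsum ((hf.image Prod.fst).subset fun a ha => ?_)]
  · simp_rw [coe_finsum_eq_tsum (hrow _)]
  · obtain ⟨b, hb⟩ := exists_ne_zero_of_finsum_ne_zero ha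
    exact ⟨(a, b), hb, rfl⟩

theorem coe_finsum₄_eq_tsum₄ {f : α → β → γ → δ → ℕ}
    (hf : (support fun x : (α × β) × γ × δ => f x.1.1 x.1.2 x.2.1 x.2.2).Finite) :
    ((∑ᶠ a, ∑ᶠ b, ∑ᶠ c, ∑ᶠ d, f a b c d : ℕ) : ℝ≥0∞) =
      ∑' a, ∑' b, ∑' c, ∑' d, (f a b c d : ℝ≥0∞) := by
  rw [coe_finsum_finsum_eq_tsum_tsum ((hf.image Prod.fst).subset fun ab hab => ?_)]
  · refine tsum_congr fun a => tsum_congr fun b => coe_finsum_finsum_eq_tsum_tsum ?_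
    exact (hf.image Prod.snd).subset fun cd hcd => ⟨((a, b), cd), hcd, rfl⟩
  · obtain ⟨c, hc⟩ := exists_ne_zero_of_finsum_ne_zero hab
    obtain ⟨d, hd⟩ := exists_ne_zero_of_finsum_ne_zero hc
    exact ⟨(ab, c, d), hd, rfl⟩

theorem tsum_tsum_tsum_comm {f : α → β → γ → ℝ≥0∞} :
    ∑' a, ∑' b, ∑' c, f a b c = ∑' c, ∑' a, ∑' b, f a b c :=
  (tsum_congr fun _ => ENNReal.tsum_comm).trans ENNReal.tsum_comm

end FinsumTsum

section Eper

variable {n c a b : ℤ}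

theorem Eper_eq_ite : Eper n c c a b = if a = b ∧ n ∣ a - c then 1 else 0 := by
  refine if_congr ⟨?_, ?_⟩ rfl rfl
  · rintro ⟨p, rfl, rfl⟩
    exact ⟨rfl, p, by ring⟩
  · rintro ⟨rfl, p, hp⟩
    exact ⟨p, by linarith, by linarith⟩

theorem eq_of_Eper_ne_zero (h : Eper n c c a b ≠ 0) : a = b := by
  rw [Eper_eq_ite] at h
  by_contra hab
  exact h (if_neg fun h' => hab h'.1)

theorem Eper_add_add : Eper n c c (a + n) (b + n) = Eper n c c a b := by
  simp only [Eper_eq_ite, add_left_inj, show a + n - c = a - c + n by ring, dvd_add_self_right]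

theorem Eper_neg_neg (hc : n ∣ 2 * c) : Eper n c c (-a) (-b) = Eper n c c a b := by
  have h : -a - c = -(a - c) - 2 * c := by ring
  simp only [Eper_eq_ite, neg_inj, h, dvd_sub_left hc, dvd_neg]

theorem Eper_self_add : Eper n (c + n) (c + n) = Eper n c c := by
  ext a b
  simp only [Eper_eq_ite, show a - (c + n) = a - c - n by ring, dvd_sub_self_right]

theorem Eper_zero : Eper n 0 0 = Eper n n n := by
  rw [← Eper_self_add, zero_add]

theorem eq_of_dvd_sub_of_mem_Icc (ha : a ∈ Set.Icc 1 n) (hc : c ∈ Set.Icc 1 n) (h : n ∣ a - c) :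
    a = c := by
  have := Int.eq_zero_of_abs_lt_dvd h <|
    abs_lt.mpr ⟨by linarith [ha.1, hc.2], by linarith [ha.2, hc.1]⟩
  linarith

theorem Eper_of_mem_Icc (ha : a ∈ Set.Icc 1 n) (hc : c ∈ Set.Icc 1 n) :
    Eper n c c a b = if a = c ∧ b = c then 1 else 0 := by
  rw [Eper_eq_ite]
  refine if_congr ⟨fun ⟨hab, h⟩ => ?_, fun ⟨hac, hbc⟩ => ⟨hac.trans hbc.symm, by simp [hac]⟩⟩
    rfl rfl
  have hac := eq_of_dvd_sub_of_mem_Icc ha hc h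
  exact ⟨hac, hab ▸ hac⟩

theorem sum_Icc_Eper (hc : c ∈ Set.Icc 1 n) (b : ℤ) :
    ∑ a ∈ Finset.Icc 1 n, Eper n c c a b = if b = c then 1 else 0 := by
  rw [Finset.sum_congr rfl fun a ha => Eper_of_mem_Icc (by simpa using ha) hc]
  by_cases hb : b = c <;> simp [hb, hc.1, hc.2]

end Eper

def IsPeriodic (n : ℤ) (X : ℤ → ℤ → ℕ) : Prop :=
  ∀ i j, X (i + n) (j + n) = X i j

theorem IsPeriodic.add_mul {n : ℤ} {X : ℤ → ℤ → ℕ} (hX : IsPeriodic n X) (p i j : ℤ) :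
    X (i + p * n) (j + p * n) = X i j := by
  have h : Periodic (fun t => X (i + t) (j + t)) n := fun t => by
    simpa only [add_assoc] using hX (i + t) (j + t)
  simpa using h.int_mul p 0

def IsBanded (M : ℤ) (X : ℤ → ℤ → ℕ) : Prop :=
  ∀ i j, X i j ≠ 0 → |i - j| ≤ M

theorem IsBanded.add {M : ℤ} {X Y : ℤ → ℤ → ℕ} (hX : IsBanded M X) (hY : IsBanded M Y) :
    IsBanded M (X + Y) := fun i j h => by
  by_cases hXij : X i j = 0
  · exact hY i j (by simpa [hXij] using h)
  · exact hX i j hXij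

theorem isBanded_Eper {M : ℤ} (hM : 0 ≤ M) (n c : ℤ) : IsBanded M (Eper n c c) := fun i j h => by
  simpa [eq_of_Eper_ne_zero h] using hM

theorem IsBanded.add_Eper_add_Eper {M : ℤ} {X : ℤ → ℤ → ℕ} (hX : IsBanded M X) (hM : 0 ≤ M)
    (n c c' : ℤ) : IsBanded M (X + Eper n c c + Eper n c' c') :=
  (hX.add (isBanded_Eper hM n c)).add (isBanded_Eper hM n c')

def hookSum (c : ℤ) (X : ℤ → ℤ → ℕ) : ℝ≥0∞ :=
  ∑' i, ∑' j, if c ≤ i ∧ j < c then (X i j : ℝ≥0∞) else 0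

def pairSum (n : ℤ) (X Y : ℤ → ℤ → ℕ) : ℝ≥0∞ :=
  ∑' i, ∑' j, ∑' m, ∑' l, if 1 ≤ i ∧ i ≤ n ∧ m ≤ i ∧ j < l then (X i j : ℝ≥0∞) * Y m l else 0

theorem coe_sigHook {M : ℤ} {X : ℤ → ℤ → ℕ} (hX : IsBanded M X) (c : ℤ) :
    (SigHook c X : ℝ≥0∞) = hookSum c X := by
  rw [SigHook, coe_finsum_finsum_eq_tsum_tsum]
  · simp only [hookSum, Nat.cast_ite, Nat.cast_zero]
  · refine ((Set.finite_Icc c (c + M)).prod (Set.finite_Icc (c - M) c)).subset ?_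
    rintro ⟨i, j⟩ h
    simp only [mem_support, uncurry_apply_pair, ne_eq, ite_eq_right_iff, not_forall] at h
    obtain ⟨⟨hci, hjc⟩, hij⟩ := h
    have := abs_le.mp (hX i j hij)
    simp only [Set.mem_prod, Set.mem_Icc]
    omega

theorem coe_sigQuad {M : ℤ} {X : ℤ → ℤ → ℕ} (hX : IsBanded M X) (r : ℕ) :
    (SigQuad r X : ℝ≥0∞) = pairSum (2 * r + 2) X X := by
  rw [SigQuad, coe_finsum₄_eq_tsum₄]
  · simp only [pairSum, Nat.cast_ite, Nat.cast_mul, Nat.cast_zero]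
  · set B := Set.Icc (1 - 2 * M) (2 * r + 2 + M)
    refine (((Set.finite_Icc _ _).prod (Set.finite_Icc _ _)).prod
      ((Set.finite_Icc _ _).prod (Set.finite_Icc _ _)) : ((B ×ˢ B) ×ˢ (B ×ˢ B)).Finite).subset ?_
    rintro ⟨⟨i, j⟩, m, l⟩ h
    simp only [mem_support, ne_eq, ite_eq_right_iff, not_forall, mul_eq_zero, not_or] at h
    obtain ⟨⟨hi1, hin, hmi, hjl⟩, hij, hml⟩ := h
    have h1 := abs_le.mp (hX i j hij)
    have h2 := abs_le.mp (hX m l hml)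
    simp only [B, Set.mem_prod, Set.mem_Icc]
    omega

section Sums

variable {n c : ℤ} {X Y Z : ℤ → ℤ → ℕ}

theorem pairSum_add_left : pairSum n (X + Y) Z = pairSum n X Z + pairSum n Y Z := by
  simp only [pairSum, Pi.add_apply, Nat.cast_add, add_mul, ite_add_zero, ENNReal.tsum_add]

theorem pairSum_add_right : pairSum n X (Y + Z) = pairSum n X Y + pairSum n X Z := by
  simp only [pairSum, Pi.add_apply, Nat.cast_add, mul_add, ite_add_zero, ENNReal.tsum_add]

theorem hookSum_add : hookSum c (X + Y) = hookSum c X + hookSum c Y := by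
  simp only [hookSum, Pi.add_apply, Nat.cast_add, ite_add_zero, ENNReal.tsum_add]

theorem hookSum_eq_zero_of_diag (hY : ∀ i j, Y i j ≠ 0 → i = j) : hookSum c Y = 0 := by
  refine ENNReal.tsum_eq_zero.mpr fun i => ENNReal.tsum_eq_zero.mpr fun j => ?_
  split_ifs with h
  · by_contra hij
    have := hY i j (by exact_mod_cast hij)
    omega
  · rfl

theorem pairSum_eq_zero_of_diag (hY : ∀ i j, Y i j ≠ 0 → i = j) (hZ : ∀ i j, Z i j ≠ 0 → i = j) :
    pairSum n Y Z = 0 := by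
  refine ENNReal.tsum_eq_zero.mpr fun i => ENNReal.tsum_eq_zero.mpr fun j =>
    ENNReal.tsum_eq_zero.mpr fun m => ENNReal.tsum_eq_zero.mpr fun l => ?_
  split_ifs with h
  · by_contra hne
    obtain ⟨hij, hml⟩ := mul_ne_zero_iff.mp hne
    have := hY i j (by exact_mod_cast hij)
    have := hZ m l (by exact_mod_cast hml)
    omega
  · rfl

theorem hookSum_add_period (hX : IsPeriodic n X) : hookSum (c + n) X = hookSum c X := by
  rw [hookSum, ← (Equiv.addRight n).tsum_eq]
  refine tsum_congr fun i => ?_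
  rw [← (Equiv.addRight n).tsum_eq]
  refine tsum_congr fun j => ?_
  simp only [Equiv.coe_addRight, hX i j, add_le_add_iff_right, add_lt_add_iff_right]

theorem tsum_tsum_Eper_mul (hn : n ≠ 0) (g : ℤ → ℤ → ℝ≥0∞) :
    ∑' m, ∑' l, (Eper n c c m l : ℝ≥0∞) * g m l = ∑' p : ℤ, g (c + p * n) (c + p * n) := by
  have hrow (m : ℤ) :
      ∑' l, (Eper n c c m l : ℝ≥0∞) * g m l = if n ∣ m - c then g m m else 0 := by
    rw [tsum_eq_single m fun l hl => by simp [Eper_eq_ite, Ne.symm hl]]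
    split_ifs with h <;> simp [Eper_eq_ite, h]
  simp_rw [hrow]
  refine (Function.Injective.tsum_eq (g := fun p => c + p * n) (fun p q h => ?_) ?_).symm.trans ?_
  · simpa [hn] using h
  · intro m hm
    obtain ⟨p, hp⟩ : n ∣ m - c := by by_contra h; exact hm (if_neg h)
    exact ⟨p, show c + p * n = m by linarith⟩
  · simp

theorem tsum_ite_add_mul_mem_Icc (hn : 0 < n) (i : ℤ) (x : ℝ≥0∞) :
    ∑' p : ℤ, (if 1 ≤ i + p * n ∧ i + p * n ≤ n then x else 0) = x := by
  obtain ⟨p₀, hp₀, huniq⟩ := existsUnique_add_zsmul_mem_Ioc hn i 0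
  simp only [smul_eq_mul, zero_add, Set.mem_Ioc] at hp₀ huniq
  rw [tsum_eq_single p₀ fun p hp => if_neg fun h => hp (huniq p ⟨by omega, h.2⟩)]
  exact if_pos ⟨by omega, hp₀.2⟩

theorem pairSum_Eper_right (hn : 0 < n) (hX : IsPeriodic n X) :
    pairSum n X (Eper n c c) = hookSum c X := by
  have hsummand (i j m l : ℤ) :
      (if 1 ≤ i ∧ i ≤ n ∧ m ≤ i ∧ j < l then (X i j : ℝ≥0∞) * Eper n c c m l else 0) =
        Eper n c c m l * if 1 ≤ i ∧ i ≤ n ∧ m ≤ i ∧ j < l then (X i j : ℝ≥0∞) else 0 := by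
    split_ifs <;> simp [mul_comm]
  have hshift (p : ℤ) :
      ∑' i, ∑' j, (if 1 ≤ i ∧ i ≤ n ∧ c + p * n ≤ i ∧ j < c + p * n then (X i j : ℝ≥0∞) else 0) =
        ∑' i, ∑' j, if 1 ≤ i + p * n ∧ i + p * n ≤ n then
          (if c ≤ i ∧ j < c then (X i j : ℝ≥0∞) else 0) else 0 := by
    rw [← (Equiv.addRight (p * n)).tsum_eq]
    refine tsum_congr fun i => ?_
    rw [← (Equiv.addRight (p * n)).tsum_eq]
    refine tsum_congr fun j => ?_
    simp only [Equiv.coe_addRight, hX.add_mul]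
    split_ifs <;> first | rfl | omega
  calc pairSum n X (Eper n c c)
      = ∑' i, ∑' j, ∑' p : ℤ,
          if 1 ≤ i ∧ i ≤ n ∧ c + p * n ≤ i ∧ j < c + p * n then (X i j : ℝ≥0∞) else 0 := by
        simp only [pairSum, hsummand, tsum_tsum_Eper_mul hn.ne']
    _ = ∑' p : ℤ, ∑' i, ∑' j,
          if 1 ≤ i ∧ i ≤ n ∧ c + p * n ≤ i ∧ j < c + p * n then (X i j : ℝ≥0∞) else 0 :=
        tsum_tsum_tsum_comm
    _ = ∑' p : ℤ, ∑' i, ∑' j, if 1 ≤ i + p * n ∧ i + p * n ≤ n then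
          (if c ≤ i ∧ j < c then (X i j : ℝ≥0∞) else 0) else 0 := tsum_congr hshift
    _ = hookSum c X := by
        rw [← tsum_tsum_tsum_comm]
        simp only [hookSum, tsum_ite_add_mul_mem_Icc hn]

theorem hookSum_neg (hX : ∀ i j, X (-i) (-j) = X i j) :
    hookSum (-c) X = ∑' m, ∑' l, if m ≤ c ∧ c < l then (X m l : ℝ≥0∞) else 0 := by
  rw [hookSum, ← (Equiv.neg ℤ).tsum_eq]
  refine tsum_congr fun i => ?_
  rw [← (Equiv.neg ℤ).tsum_eq]
  refine tsum_congr fun j => ?_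
  simp only [Equiv.neg_apply, hX, neg_le_neg_iff, neg_lt_neg_iff]

theorem pairSum_Eper_left (hn : 0 < n) (hc : c ∈ Set.Icc 1 n)
    (hX : ∀ i j, X (-i) (-j) = X i j) :
    pairSum n (Eper n c c) X = hookSum (-c) X := by
  have hsummand (i j m l : ℤ) :
      (if 1 ≤ i ∧ i ≤ n ∧ m ≤ i ∧ j < l then (Eper n c c i j : ℝ≥0∞) * X m l else 0) =
        Eper n c c i j * if 1 ≤ i ∧ i ≤ n ∧ m ≤ i ∧ j < l then (X m l : ℝ≥0∞) else 0 := by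
    split_ifs <;> simp
  simp only [pairSum, hsummand, ENNReal.tsum_mul_left, tsum_tsum_Eper_mul hn.ne']
  rw [tsum_eq_single 0 fun p hp => ?_, hookSum_neg hX]
  · simp [hc.1, hc.2]
  · have : ¬(1 ≤ c + p * n ∧ c + p * n ≤ n) := by
      rintro ⟨h1, h2⟩
      rcases lt_or_gt_of_ne hp with hp | hp <;> nlinarith [hc.1, hc.2]
    exact ENNReal.tsum_eq_zero.mpr fun m => ENNReal.tsum_eq_zero.mpr fun l =>
      if_neg fun h => this ⟨h.1, h.2.1⟩

end Sums

theorem pairSum_add_Eper_add_Eper (r : ℕ) {X : ℤ → ℤ → ℕ}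
    (hsymm : ∀ i j, X (-i) (-j) = X i j) (hX : IsPeriodic (2 * r + 2) X) :
    pairSum (2 * r + 2) (X + Eper (2 * r + 2) 0 0 + Eper (2 * r + 2) (r + 1) (r + 1))
        (X + Eper (2 * r + 2) 0 0 + Eper (2 * r + 2) (r + 1) (r + 1)) =
      pairSum (2 * r + 2) X X + 2 * hookSum 0 X + 2 * hookSum (r + 1) X := by
  set n : ℤ := 2 * r + 2
  have hn : 0 < n := by omega
  have hdiag (c : ℤ) : ∀ i j, Eper n c c i j ≠ 0 → i = j := fun _ _ => eq_of_Eper_ne_zero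
  have h0 : pairSum n (Eper n 0 0) X = hookSum 0 X := by
    rw [Eper_zero, pairSum_Eper_left hn ⟨by omega, le_rfl⟩ hsymm, ← hookSum_add_period hX,
      neg_add_cancel]
  have h1 : pairSum n (Eper n (r + 1) (r + 1)) X = hookSum (r + 1) X := by
    rw [pairSum_Eper_left hn ⟨by omega, by omega⟩ hsymm, ← hookSum_add_period hX]
    congr 1
    omega
  simp only [pairSum_add_left, pairSum_add_right, pairSum_eq_zero_of_diag (hdiag _) (hdiag _),
    pairSum_Eper_right hn hX, h0, h1]
  ring

section MemXiCper

variable {r d : ℕ} {A : ℤ → ℤ → ℕ}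

theorem MemXiCper.isPeriodic (hA : MemXiCper r d A) : IsPeriodic (2 * r + 2) A :=
  fun i j => (hA.2.1 i j).symm

-- `∑ᶠ` is `0` on infinitely supported functions, so a nonzero total forces finite support.
theorem MemXiCper.finite_support_rowSum (hA : MemXiCper r d A) (hd : d ≠ 0) :
    (support fun j => ∑ i ∈ Finset.Icc 1 (2 * (r : ℤ) + 2), A i j).Finite := by
  by_contra h
  have := hA.2.2.2.2
  rw [finsum_of_infinite_support h] at this
  omega

theorem MemXiCper.exists_isBanded (hA : MemXiCper r d A) (hd : d ≠ 0) :
    ∃ M, 0 ≤ M ∧ IsBanded M A := by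
  obtain ⟨u, hu⟩ := (hA.finite_support_rowSum hd).bddAbove
  obtain ⟨l, hl⟩ := (hA.finite_support_rowSum hd).bddBelow
  refine ⟨max (max (2 * r + 2 - l) (u - 1)) 0, le_max_right _ _, fun i j hij => ?_⟩
  obtain ⟨p, hp, -⟩ := existsUnique_add_zsmul_mem_Ioc (show (0 : ℤ) < 2 * r + 2 by omega) i 0
  simp only [smul_eq_mul, zero_add, Set.mem_Ioc] at hp
  have hrow :
      j + p * (2 * r + 2) ∈ support fun j => ∑ i ∈ Finset.Icc 1 (2 * (r : ℤ) + 2), A i j :=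
    fun h => hij <| by
      rw [← hA.isPeriodic.add_mul p]
      exact Finset.sum_eq_zero_iff.mp h _ (Finset.mem_Icc.mpr ⟨by omega, hp.2⟩)
  have := hu hrow
  have := hl hrow
  rw [abs_le]
  constructor <;> omega

theorem MemXiCper.memXi_add_Eper (hA : MemXiCper r d A) (hd : d ≠ 0) :
    MemXi r d (A + Eper (2 * r + 2) 0 0 + Eper (2 * r + 2) (r + 1) (r + 1)) := by
  have hrow := hA.finite_support_rowSum hd
  obtain ⟨hsymm, hper, heven₀, heven₁, hsum⟩ := hA
  set n : ℤ := 2 * r + 2 with hn_def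
  have hn : n ∈ Set.Icc 1 n := ⟨by omega, le_rfl⟩
  have hr : (r : ℤ) + 1 ∈ Set.Icc 1 n := ⟨by omega, by omega⟩
  refine ⟨fun i j => ?_, fun i j => ?_, ?_, ?_, ?_⟩
  · simp only [Pi.add_apply]
    rw [Eper_neg_neg (dvd_zero _), Eper_neg_neg ⟨1, by omega⟩, ← hsymm]
  · simp only [Pi.add_apply]
    rw [Eper_add_add, Eper_add_add, ← hper]
  · have h₀ : Eper n 0 0 0 0 = 1 := by simp [Eper_eq_ite]
    have h₁ : Eper n (r + 1) (r + 1) 0 0 = 0 := by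
      rw [← Eper_add_add, zero_add, Eper_of_mem_Icc hn hr, if_neg (by omega)]
    simpa [h₀, h₁] using heven₀.add_one
  · have h₀ : Eper n 0 0 (r + 1) (r + 1) = 0 := by
      rw [Eper_zero, Eper_of_mem_Icc hr hn, if_neg (by omega)]
    have h₁ : Eper n (r + 1) (r + 1) (r + 1) (r + 1) = 1 := by
      rw [Eper_of_mem_Icc hr hr, if_pos ⟨rfl, rfl⟩]
    simpa [h₀, h₁] using heven₁.add_one
  · have hsingle (c : ℤ) : (support fun j : ℤ => (if j = c then 1 else 0 : ℕ)).Finite :=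
      (Set.finite_singleton c).subset fun j hj => by_contra fun h => hj (if_neg h)
    simp only [← hn_def, Pi.add_apply, Finset.sum_add_distrib, Eper_zero, sum_Icc_Eper hn,
      sum_Icc_Eper hr]
    rw [finsum_add_distrib ((hrow.union (hsingle _)).subset (support_add _ _)) (hsingle _),
      finsum_add_distrib hrow (hsingle _), hsum, finsum_ite_eq_one, finsum_ite_eq_one]

theorem MemXiCper.sigQuad_add_Eper_add_Eper (hA : MemXiCper r d A) (hd : d ≠ 0) :
    SigQuad r (A + Eper (2 * r + 2) 0 0 + Eper (2 * r + 2) (r + 1) (r + 1)) =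
      SigQuad r A + 2 * SigHook 0 A + 2 * SigHook (r + 1) A := by
  obtain ⟨M, hM0, hM⟩ := hA.exists_isBanded hd
  have hM' := hM.add_Eper_add_Eper hM0 (2 * r + 2) 0 (r + 1)
  have h := pairSum_add_Eper_add_Eper r (fun i j => (hA.1 i j).symm) hA.isPeriodic
  rw [← coe_sigQuad hM', ← coe_sigQuad hM, ← coe_sigHook hM, ← coe_sigHook hM] at h
  exact_mod_cast h

theorem MemXiCper.sigHook_add_Eper_add_Eper (hA : MemXiCper r d A) (hd : d ≠ 0) (c : ℤ) :
    SigHook c (A + Eper (2 * r + 2) 0 0 + Eper (2 * r + 2) (r + 1) (r + 1)) = SigHook c A := by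
  obtain ⟨M, hM0, hM⟩ := hA.exists_isBanded hd
  have hM' := hM.add_Eper_add_Eper hM0 (2 * r + 2) 0 (r + 1)
  have h : hookSum c (A + Eper (2 * r + 2) 0 0 + Eper (2 * r + 2) (r + 1) (r + 1)) =
      hookSum c A := by
    rw [hookSum_add, hookSum_add, hookSum_eq_zero_of_diag fun _ _ => eq_of_Eper_ne_zero,
      hookSum_eq_zero_of_diag fun _ _ => eq_of_Eper_ne_zero, add_zero, add_zero]
  rw [← coe_sigHook hM', ← coe_sigHook hM] at h
  exact_mod_cast h

end MemXiCper

end AffMat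

/-- Let `A ∈ ^cΞ_{n,d}` and `A′ = A + E^{00} + E^{r+1,r+1}`.  Then
`A′ ∈ Ξ_{n,d}` and `Σ'(A) + Σ_0(A) + Σ_{r+1}(A) = Σ'(A′) - Σ_0(A′) - Σ_{r+1}(A′)`. -/
theorem statement16 (r d : ℕ) (hd : 1 ≤ d) (A : ℤ → ℤ → ℕ) (hA : MemXiCper r d A) :
    MemXi r d (fun a b => A a b + Eper (2 * r + 2) 0 0 a b +
      Eper (2 * r + 2) ((r : ℤ) + 1) ((r : ℤ) + 1) a b) ∧
    (SigQuad r A : ℤ) + (SigHook 0 A : ℤ) + (SigHook ((r : ℤ) + 1) A : ℤ) =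
      (SigQuad r (fun a b => A a b + Eper (2 * r + 2) 0 0 a b +
          Eper (2 * r + 2) ((r : ℤ) + 1) ((r : ℤ) + 1) a b) : ℤ)
        - (SigHook 0 (fun a b => A a b + Eper (2 * r + 2) 0 0 a b +
            Eper (2 * r + 2) ((r : ℤ) + 1) ((r : ℤ) + 1) a b) : ℤ)
        - (SigHook ((r : ℤ) + 1) (fun a b => A a b + Eper (2 * r + 2) 0 0 a b +
            Eper (2 * r + 2) ((r : ℤ) + 1) ((r : ℤ) + 1) a b) : ℤ) := by
  have hd₀ : d ≠ 0 := by omega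
  have hA' : (fun a b => A a b + Eper (2 * r + 2) 0 0 a b +
      Eper (2 * r + 2) ((r : ℤ) + 1) ((r : ℤ) + 1) a b) =
      A + Eper (2 * r + 2) 0 0 + Eper (2 * r + 2) (r + 1) (r + 1) := rfl
  rw [hA']
  refine ⟨hA.memXi_add_Eper hd₀, ?_⟩
  rw [hA.sigQuad_add_Eper_add_Eper hd₀, hA.sigHook_add_Eper_add_Eper hd₀,
    hA.sigHook_add_Eper_add_Eper hd₀]
  push_cast
  ring
end
end
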